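/- For every c > 0, the length of the Euclidean circle of radius c with respect to the cigar metric g_c equals 2πc/√(1 + c²): explicitly, for γ_c(θ) = (c·cos θ, c·sin θ), one has ∫₀^{2π} ‖γ_c'(θ)‖/√(1 + ‖γ_c(θ)‖²) dθ = 2πc/√(1 + c²). In particular this length is strictly less than 2π for every c > 0, and sup_{c>0} 2πc/√(1 + c²) = 2π; hence the proper function F(p) = ‖p‖ has width w(F) = 2π with respect to g_c, so the width of the cigar metric satisfies w(g_c) ≤ 2π < ∞. -/

import Mathlib

/-!
The circle of radius `c` has constant Euclidean speed `|c|` and stays at distance `|c|` from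
the origin, so the cigar length integrand is the constant `|c|/√(1+c²)`. This ratio is below
`1` and, being `√(1 - 1/(1+c²))` for `c ≥ 0`, tends to `1` as `c → ∞`, which gives the
supremum `2π`.
-/

open Real Filter Topology

/-- The Euclidean circle of radius `c`, as a curve in ℝ². -/
noncomputable def circleCurve (c : ℝ) (θ : ℝ) : EuclideanSpace ℝ (Fin 2) :=
  (WithLp.equiv 2 (Fin 2 → ℝ)).symm ![c * Real.cos θ, c * Real.sin θ]

/-- Length of `γ|[a,b]` for the cigar metric `g_E / (1 + ‖x‖²)`. -/
noncomputable def cigarLength {E : Type*} [NormedAddCommGroup E] [NormedSpace ℝ E]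
    (γ : ℝ → E) (a b : ℝ) : ℝ :=
  ∫ θ in a..b, ‖deriv γ θ‖ / √(1 + ‖γ θ‖ ^ 2)

lemma norm_equiv_symm_vecCons (a b : ℝ) :
    ‖(WithLp.equiv 2 (Fin 2 → ℝ)).symm ![a, b]‖ = √(a ^ 2 + b ^ 2) := by
  simp [EuclideanSpace.norm_eq, Fin.sum_univ_two, sq_abs]

lemma norm_circleCurve (c θ : ℝ) : ‖circleCurve c θ‖ = |c| := by
  rw [circleCurve, norm_equiv_symm_vecCons, ← sqrt_sq_eq_abs]
  congr 1
  linear_combination c ^ 2 * cos_sq_add_sin_sq θ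

lemma hasDerivAt_circleCurve (c θ : ℝ) :
    HasDerivAt (circleCurve c)
      ((WithLp.equiv 2 (Fin 2 → ℝ)).symm ![-(c * sin θ), c * cos θ]) θ := by
  have hvec : HasDerivAt (fun t => ![c * cos t, c * sin t])
      ![-(c * sin θ), c * cos θ] θ := by
    rw [hasDerivAt_pi]
    intro i
    fin_cases i
    · simpa [mul_comm] using (hasDerivAt_cos θ).const_mul c
    · simpa [mul_comm] using (hasDerivAt_sin θ).const_mul c
  exact (PiLp.continuousLinearEquiv 2 ℝ fun _ : Fin 2 => ℝ).symm.hasFDerivAt.comp_hasDerivAt θ hvec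

lemma norm_deriv_circleCurve (c θ : ℝ) : ‖deriv (circleCurve c) θ‖ = |c| := by
  rw [(hasDerivAt_circleCurve c θ).deriv, norm_equiv_symm_vecCons, ← sqrt_sq_eq_abs]
  congr 1
  linear_combination c ^ 2 * sin_sq_add_cos_sq θ

theorem cigarLength_circleCurve (c : ℝ) :
    cigarLength (circleCurve c) 0 (2 * π) = 2 * π * |c| / √(1 + c ^ 2) := by
  simp only [cigarLength, norm_deriv_circleCurve, norm_circleCurve, sq_abs,
    intervalIntegral.integral_const, smul_eq_mul]
  ring

lemma div_sqrt_one_add_sq_lt_one (c : ℝ) : c / √(1 + c ^ 2) < 1 := by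
  rw [div_lt_one (sqrt_pos.2 (by positivity))]
  calc c ≤ |c| := le_abs_self c
    _ < √(1 + c ^ 2) := by
      rw [lt_sqrt (abs_nonneg c), sq_abs]
      linarith

lemma tendsto_div_sqrt_one_add_sq_atTop :
    Tendsto (fun c : ℝ => c / √(1 + c ^ 2)) atTop (𝓝 1) := by
  have hinv : Tendsto (fun c : ℝ => (1 + c ^ 2)⁻¹) atTop (𝓝 0) :=
    tendsto_inv_atTop_zero.comp
      (tendsto_atTop_add_const_left _ 1 (tendsto_pow_atTop two_ne_zero))
  have hsqrt : Tendsto (fun c : ℝ => √(1 - (1 + c ^ 2)⁻¹)) atTop (𝓝 1) := by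
    simpa using (tendsto_const_nhds (x := (1 : ℝ)).sub hinv).sqrt
  refine hsqrt.congr' ?_
  filter_upwards [eventually_ge_atTop 0] with c hc
  have hpos : (0 : ℝ) < 1 + c ^ 2 := by positivity
  rw [show 1 - (1 + c ^ 2)⁻¹ = c ^ 2 / (1 + c ^ 2) by field_simp; ring,
    sqrt_div (sq_nonneg c), sqrt_sq hc]

lemma ciSup_pos_eq_of_tendsto_atTop {f : ℝ → ℝ} {a : ℝ} (hle : ∀ c, 0 < c → f c ≤ a)
    (hf : Tendsto f atTop (𝓝 a)) : ⨆ c : {c : ℝ // 0 < c}, f c = a := by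
  have hbdd : BddAbove (Set.range fun c : {c : ℝ // 0 < c} => f c) := by
    refine ⟨a, ?_⟩
    rintro _ ⟨c, rfl⟩
    exact hle c c.2
  refine le_antisymm (ciSup_le fun c => hle c c.2) (le_of_tendsto hf ?_)
  filter_upwards [eventually_gt_atTop 0] with c hc
  exact le_ciSup hbdd ⟨c, hc⟩

lemma two_pi_mul_div_sqrt_lt (c : ℝ) : 2 * π * c / √(1 + c ^ 2) < 2 * π := by
  rw [mul_div_assoc]
  exact mul_lt_of_lt_one_right (by positivity) (div_sqrt_one_add_sq_lt_one c)

/-- For every `c > 0`, the cigar length of the Euclidean circle of radius `c` is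
`2πc/√(1+c²)`, which is strictly less than `2π`; and the supremum over `c > 0` of
these lengths is `2π`.  Hence the proper function `F(p) = ‖p‖` has width `2π` with
respect to the cigar metric, so `w(g_c) ≤ 2π < ∞`. -/
theorem cigar_circle_lengths_and_width :
    (∀ c : ℝ, 0 < c →
      (∫ θ in (0:ℝ)..(2 * π),
          ‖deriv (circleCurve c) θ‖ / Real.sqrt (1 + ‖circleCurve c θ‖ ^ 2)) =
        2 * π * c / Real.sqrt (1 + c ^ 2)) ∧
    (∀ c : ℝ, 0 < c → 2 * π * c / Real.sqrt (1 + c ^ 2) < 2 * π) ∧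
    (⨆ c : {c : ℝ // 0 < c}, 2 * π * (c : ℝ) / Real.sqrt (1 + (c : ℝ) ^ 2)) = 2 * π := by
  refine ⟨fun c hc => ?_, fun c _ => two_pi_mul_div_sqrt_lt c, ?_⟩
  · exact (cigarLength_circleCurve c).trans (by rw [abs_of_pos hc])
  · refine ciSup_pos_eq_of_tendsto_atTop (fun c _ => (two_pi_mul_div_sqrt_lt c).le) ?_
    simpa [mul_div_assoc] using tendsto_div_sqrt_one_add_sq_atTop.const_mul (2 * π)
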